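/- Let D be a smooth, deterministic, decomposable PROB with positive-weight-induced branch parameters, and suppose the sampling procedure at each decision node on variable x chooses the hi-branch with probability θ_hi·P(hi)/(θ_lo·P(lo) + θ_hi·P(hi)) (when the denominator is positive) and recursively combines child samples at conjunction nodes by union. Then the resulting distribution over complete assignments equals the W-proportional distribution on the satisfying assignments of the formula D represents: each satisfying τ is output with probability W(τ)/Σ_{τ' ⊨ F} W(τ'). -/

import Mathlib

/-- A PROB (probabilistic OBDD[∧]): true/false leaves, decision nodes on a
variable with lo/hi children, and conjunction nodes with a list of children. -/
inductive PROB (V : Type) : Type where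
  | tru : PROB V
  | fls : PROB V
  | dec (x : V) (lo hi : PROB V) : PROB V
  | conj (children : List (PROB V)) : PROB V

namespace PROB

variable {V : Type}

/-- The set of variables mentioned in the sub-PROB rooted at a node. -/
def vars [DecidableEq V] : PROB V → Finset V
  | .tru => ∅
  | .fls => ∅
  | .dec x lo hi => insert x (lo.vars ∪ hi.vars)
  | .conj cs => (cs.attach.map (fun c => c.1.vars)).foldr (· ∪ ·) ∅
decreasing_by
  all_goals simp_wf
  all_goals try omega
  all_goals (have h := List.sizeOf_lt_of_mem c.2; omega)

/-- Whether an assignment τ satisfies the PROB: the traversal following τ at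
decision nodes and visiting all children of conjunction nodes never reaches
the false node. -/
def satb : PROB V → (V → Bool) → Bool
  | .tru, _ => true
  | .fls, _ => false
  | .dec x lo hi, τ => if τ x then hi.satb τ else lo.satb τ
  | .conj cs, τ => cs.attach.all (fun c => c.1.satb τ)
decreasing_by
  all_goals simp_wf
  all_goals try omega
  all_goals (have h := List.sizeOf_lt_of_mem c.2; omega)

/-- Bottom-up joint probability annotation induced by a literal weight
function `W` (with `W x true` the weight of literal `x` and `W x false` the
weight of `¬x`): false ↦ 0, true ↦ 1, decision node ↦ θ_lo·P(lo) + θ_hi·P(hi)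
with normalized branch parameters, conjunction ↦ product of children. -/
noncomputable def jointP (W : V → Bool → ℝ) : PROB V → ℝ
  | .tru => 1
  | .fls => 0
  | .dec x lo hi =>
      (W x false / (W x true + W x false)) * jointP W lo +
      (W x true / (W x true + W x false)) * jointP W hi
  | .conj cs => (cs.attach.map (fun c => jointP W c.1)).prod
decreasing_by
  all_goals simp_wf
  all_goals try omega
  all_goals (have h := List.sizeOf_lt_of_mem c.2; omega)

/-- Structural invariants of a PROB: determinism is inherent in the decision
semantics; decomposability: conjunction children have pairwise disjoint
variable sets; smoothness: both children of a decision node mention the same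
variables; and the decision variable does not occur below the decision node. -/
inductive Wf [DecidableEq V] : PROB V → Prop
  | tru : Wf .tru
  | fls : Wf .fls
  | dec {x : V} {lo hi : PROB V} (hxlo : x ∉ lo.vars) (hxhi : x ∉ hi.vars)
      (hsmooth : lo.vars = hi.vars) (hlo : Wf lo) (hhi : Wf hi) :
      Wf (.dec x lo hi)
  | conj {cs : List (PROB V)} (h : ∀ c ∈ cs, Wf c)
      (hdecomp : cs.Pairwise (fun a b => Disjoint a.vars b.vars)) :
      Wf (.conj cs)

end PROB

namespace PROB

/-- The probability that the INC sampling procedure, run on the sub-PROB at a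
node, outputs a partial assignment agreeing with `τ` on the node's variables:
at a decision node on `x` the hi-branch is taken with probability
θ_hi·P(hi)/(θ_lo·P(lo) + θ_hi·P(hi)), and at a conjunction node the children's
independent samples are combined by union. -/
noncomputable def sampP {V : Type} (W : V → Bool → ℝ) : PROB V → (V → Bool) → ℝ
  | .tru, _ => 1
  | .fls, _ => 0
  | .dec x lo hi, τ =>
      if τ x then
        ((W x true / (W x true + W x false)) * jointP W hi /
          ((W x false / (W x true + W x false)) * jointP W lo +
           (W x true / (W x true + W x false)) * jointP W hi)) * sampP W hi τ
      else
        ((W x false / (W x true + W x false)) * jointP W lo /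
          ((W x false / (W x true + W x false)) * jointP W lo +
           (W x true / (W x true + W x false)) * jointP W hi)) * sampP W lo τ
  | .conj cs, τ => (cs.attach.map (fun c => sampP W c.1 τ)).prod
decreasing_by
  all_goals simp_wf
  all_goals try omega
  all_goals (have h := List.sizeOf_lt_of_mem c.2; omega)

end PROB

/-! With the normalized branch parameters `θ v b = W v b / (W v true + W v false)` the
assignments of `V` carry a product probability, and `P(D)` is the probability of the models
of `D`: a decision node splits its models by the value of `x`, which is independent of the
variables below it, and decomposability makes the model sets of conjunction children
independent. For a model `τ` the sampler then satisfies
`sampP D τ * P(D) = ∏_{v ∈ vars D} θ v (τ v)`: at a decision node the factor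
`P(child) / P(D)` of the branch choice cancels, and smoothness makes both branches account for
the same variables. When `D` mentions every variable the
common factor `∏ v, (W v true + W v false)` cancels from `θ(τ) / Σ_{τ' ⊨ D} θ(τ')`. -/

namespace PROB

section Structure

variable {V : Type}

theorem induction_on {motive : PROB V → Prop} (tru : motive .tru) (fls : motive .fls)
    (dec : ∀ x lo hi, motive lo → motive hi → motive (.dec x lo hi))
    (conj : ∀ cs, (∀ c ∈ cs, motive c) → motive (.conj cs)) : ∀ D, motive D
  | .tru => tru
  | .fls => fls
  | .dec x lo hi =>
    dec x lo hi (induction_on tru fls dec conj lo) (induction_on tru fls dec conj hi)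
  | .conj cs => conj cs fun c _ => induction_on tru fls dec conj c
decreasing_by
  all_goals simp_wf
  all_goals try omega
  all_goals (have h := List.sizeOf_lt_of_mem ‹c ∈ cs›; omega)

def models (D : PROB V) : Set (V → Bool) := {σ | D.satb σ = true}

noncomputable def branchParam (W : V → Bool → ℝ) (v : V) (b : Bool) : ℝ :=
  W v b / (W v true + W v false)

theorem branchParam_pos {W : V → Bool → ℝ} (hW : ∀ v b, 0 < W v b) (v : V) (b : Bool) :
    0 < branchParam W v b :=
  div_pos (hW v b) (add_pos (hW v true) (hW v false))

theorem branchParam_true_add_false {W : V → Bool → ℝ} (hW : ∀ v b, 0 < W v b) (v : V) :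
    branchParam W v true + branchParam W v false = 1 := by
  rw [branchParam, branchParam, ← add_div, div_self (add_pos (hW v true) (hW v false)).ne']

theorem satb_conj {cs : List (PROB V)} {σ : V → Bool} :
    (conj cs).satb σ = true ↔ ∀ c ∈ cs, c.satb σ = true := by
  simp [satb]

theorem jointP_dec (W : V → Bool → ℝ) (x : V) (lo hi : PROB V) :
    (dec x lo hi).jointP W =
      branchParam W x false * lo.jointP W + branchParam W x true * hi.jointP W := by
  rw [jointP]; rfl

theorem jointP_conj (W : V → Bool → ℝ) (cs : List (PROB V)) :
    (conj cs).jointP W = (cs.map (jointP W)).prod := by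
  rw [jointP]; simp

theorem sampP_dec (W : V → Bool → ℝ) (x : V) (lo hi : PROB V) (τ : V → Bool) :
    (dec x lo hi).sampP W τ =
      if τ x then branchParam W x true * hi.jointP W / (dec x lo hi).jointP W * hi.sampP W τ
      else branchParam W x false * lo.jointP W / (dec x lo hi).jointP W * lo.sampP W τ := by
  rw [sampP, jointP]; rfl

theorem sampP_conj (W : V → Bool → ℝ) (cs : List (PROB V)) (τ : V → Bool) :
    (conj cs).sampP W τ = (cs.map (sampP W · τ)).prod := by
  rw [sampP]; simp

theorem sampP_eq_zero (W : V → Bool → ℝ) {D : PROB V} {τ : V → Bool}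
    (hτ : D.satb τ = false) : D.sampP W τ = 0 := by
  induction D using induction_on with
  | tru => simp [satb] at hτ
  | fls => simp [sampP]
  | dec x lo hi ihlo ihhi =>
    rw [sampP_dec]
    cases hx : τ x <;> simp only [satb, hx, Bool.false_eq_true, if_false, if_true] at hτ ⊢
    · rw [ihlo hτ, mul_zero]
    · rw [ihhi hτ, mul_zero]
  | conj cs ih =>
    obtain ⟨c, hc, hcτ⟩ : ∃ c ∈ cs, c.satb τ = false := by
      simpa using mt satb_conj.2 (by simp [hτ])
    rw [sampP_conj]
    exact List.prod_eq_zero (List.mem_map.2 ⟨c, hc, ih c hc hcτ⟩)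

variable [DecidableEq V]

theorem vars_conj_nil : (conj ([] : List (PROB V))).vars = ∅ := by
  simp [vars]

theorem vars_conj_cons (c : PROB V) (cs : List (PROB V)) :
    (conj (c :: cs)).vars = c.vars ∪ (conj cs).vars := by
  simp [vars]

theorem mem_vars_conj {v : V} {cs : List (PROB V)} :
    v ∈ (conj cs).vars ↔ ∃ c ∈ cs, v ∈ c.vars := by
  induction cs with
  | nil => simp [vars_conj_nil]
  | cons c cs ih => simp [vars_conj_cons, ih]

theorem prod_vars_conj {M : Type*} [CommMonoid M] (f : V → M) {cs : List (PROB V)}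
    (hcs : cs.Pairwise fun a b => Disjoint a.vars b.vars) :
    ∏ v ∈ (conj cs).vars, f v = (cs.map fun c => ∏ v ∈ c.vars, f v).prod := by
  induction cs with
  | nil => simp [vars_conj_nil]
  | cons c cs ih =>
    obtain ⟨hdisj, hcs⟩ := List.pairwise_cons.1 hcs
    have hc : Disjoint c.vars (conj cs).vars := Finset.disjoint_left.2 fun v hv hv' => by
      obtain ⟨c', hc', hv'⟩ := mem_vars_conj.1 hv'
      exact Finset.disjoint_left.1 (hdisj c' hc') hv hv'
    rw [vars_conj_cons, Finset.prod_union hc, ih hcs, List.map_cons, List.prod_cons]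

theorem dependsOn_satb (D : PROB V) : DependsOn D.satb D.vars := by
  induction D using induction_on with
  | tru => exact fun _ _ _ => by simp [satb]
  | fls => exact fun _ _ _ => by simp [satb]
  | dec x lo hi ihlo ihhi =>
    intro σ σ' h
    have hx : σ x = σ' x := h x (by simp [vars])
    rw [satb, satb, hx, ihlo fun v hv => h v (by simp [vars, hv]),
      ihhi fun v hv => h v (by simp [vars, hv])]
  | conj cs ih =>
    intro σ σ' h
    rw [Bool.eq_iff_iff, satb_conj, satb_conj]
    refine forall₂_congr fun c hc => ?_
    rw [ih c hc fun v hv => h v (mem_vars_conj.2 ⟨c, hc, hv⟩)]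

theorem dependsOn_mem_models (D : PROB V) : DependsOn (· ∈ D.models) D.vars :=
  fun _ _ h => congrArg (· = true) (dependsOn_satb D h)

end Structure

section WeightedModelCount

variable {V : Type} [Fintype V] [DecidableEq V]

noncomputable def weight (w : V → Bool → ℝ) (σ : V → Bool) : ℝ := ∏ v, w v (σ v)

noncomputable def wmc (w : V → Bool → ℝ) (S : Set (V → Bool)) : ℝ :=
  ∑ σ, S.indicator (weight w) σ

variable {w : V → Bool → ℝ}

theorem wmc_union {S T : Set (V → Bool)} (h : Disjoint S T) :
    wmc w (S ∪ T) = wmc w S + wmc w T := by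
  simp only [wmc, Set.indicator_union_of_disjoint h, Finset.sum_add_distrib]

theorem wmc_pos (hw : ∀ v b, 0 < w v b) {S : Set (V → Bool)} {τ : V → Bool}
    (hτ : τ ∈ S) : 0 < wmc w S := by
  have hweight : ∀ σ, 0 < weight w σ := fun σ => Finset.prod_pos fun v _ => hw v _
  refine Finset.sum_pos' (fun σ _ => Set.indicator_nonneg (fun σ _ => (hweight σ).le) σ)
    ⟨τ, Finset.mem_univ _, ?_⟩
  rw [Set.indicator_of_mem hτ]
  exact hweight τ

section Normalized

variable (hw : ∀ v, w v true + w v false = 1)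
include hw

theorem wmc_univ : wmc w Set.univ = 1 := by
  simp only [wmc, Set.indicator_univ, weight, ← Fintype.prod_sum, Fintype.sum_bool, hw,
    Finset.prod_const_one]

theorem wmc_cylinder (s : Finset V) (τ : V → Bool) :
    wmc w {σ | ∀ v ∈ s, σ v = τ v} = ∏ v ∈ s, w v (τ v) := by
  let g : V → Bool → ℝ := fun v b =>
    if v ∈ s then (if b = τ v then w v b else 0) else w v b
  have hg : ∀ σ,
      {σ | ∀ v ∈ s, σ v = τ v}.indicator (weight w) σ = ∏ v, g v (σ v) := by
    intro σ
    by_cases hσ : ∀ v ∈ s, σ v = τ v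
    · rw [Set.indicator_of_mem (show σ ∈ {σ | ∀ v ∈ s, σ v = τ v} from hσ)]
      refine Finset.prod_congr rfl fun v _ => ?_
      by_cases hv : v ∈ s <;> simp [g, hv, hσ]
    · rw [Set.indicator_of_notMem (show σ ∉ {σ | ∀ v ∈ s, σ v = τ v} from hσ)]
      obtain ⟨v, hv, hne⟩ : ∃ v ∈ s, σ v ≠ τ v := by simpa using hσ
      exact (Finset.prod_eq_zero (Finset.mem_univ v) (by simp [g, hv, hne])).symm
  calc wmc w {σ | ∀ v ∈ s, σ v = τ v} = ∏ v, ∑ b, g v b := by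
        simp only [wmc, hg, Fintype.prod_sum]
    _ = ∏ v, if v ∈ s then w v (τ v) else 1 := by
        refine Finset.prod_congr rfl fun v _ => ?_
        by_cases hv : v ∈ s
        · cases h : τ v <;> simp [g, hv, h]
        · simp [g, hv, hw]
    _ = ∏ v ∈ s, w v (τ v) := by rw [Finset.prod_ite_mem, Finset.univ_inter]

theorem wmc_setOf_apply_eq (x : V) (b : Bool) : wmc w {σ | σ x = b} = w x b := by
  simpa using wmc_cylinder hw {x} fun _ => b

theorem wmc_inter {S T : Set (V → Bool)} {s : Set V}
    (hS : DependsOn (· ∈ S) s) (hT : DependsOn (· ∈ T) sᶜ) :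
    wmc w (S ∩ T) = wmc w S * wmc w T := by
  classical
  -- Exchanging the values on `s` of two assignments is a weight-preserving involution of pairs
  -- which turns `(σ ∈ S ∩ T, σ')` into `(σ ∈ S, σ' ∈ T)`.
  let mix : (V → Bool) → (V → Bool) → V → Bool := fun a b => s.piecewise a b
  have mix_mix : ∀ a b, mix (mix a b) (mix b a) = a := fun a b => by
    ext v; by_cases hv : v ∈ s <;> simp [mix, hv]
  have swap : Function.Involutive
      fun p : (V → Bool) × (V → Bool) => (mix p.1 p.2, mix p.2 p.1) := fun p => by
    simp only [mix_mix]
  rw [← mul_one (wmc w (S ∩ T)), ← wmc_univ hw]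
  simp only [wmc, Finset.sum_mul_sum, ← Fintype.sum_prod_type']
  refine Fintype.sum_bijective _ swap.bijective _ _ fun ⟨σ, σ'⟩ => ?_
  have hSσ : (mix σ σ' ∈ S) = (σ ∈ S) := hS fun v hv => by simp [mix, hv]
  have hTσ : (mix σ' σ ∈ T) = (σ ∈ T) := hT fun v hv => by simp_all [mix]
  have hweight : weight w (mix σ σ') * weight w (mix σ' σ) = weight w σ * weight w σ' := by
    simp only [weight, ← Finset.prod_mul_distrib]
    refine Finset.prod_congr rfl fun v _ => ?_
    by_cases hv : v ∈ s <;> simp [mix, hv, mul_comm]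
  simp only [Set.indicator_apply, Set.mem_inter_iff, Set.mem_univ, hSσ, hTσ]
  split_ifs <;> simp_all

theorem wmc_setOf_forall_list_mem {ι : Type*} (l : List ι) (S : ι → Set (V → Bool))
    (s : ι → Set V) (hS : ∀ i ∈ l, DependsOn (· ∈ S i) (s i))
    (hl : l.Pairwise fun i j => Disjoint (s i) (s j)) :
    wmc w {σ | ∀ i ∈ l, σ ∈ S i} = (l.map fun i => wmc w (S i)).prod := by
  induction l with
  | nil => simpa using wmc_univ hw
  | cons i l ih =>
    obtain ⟨hdisj, hl⟩ := List.pairwise_cons.1 hl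
    have hrest : DependsOn (· ∈ {σ | ∀ j ∈ l, σ ∈ S j}) (s i)ᶜ := fun σ σ' h =>
      propext <| forall₂_congr fun j hj => iff_of_eq <|
        hS j (List.mem_cons_of_mem i hj) fun v hv => h v (Set.disjoint_right.1 (hdisj j hj) hv)
    have hsplit : {σ | ∀ j ∈ i :: l, σ ∈ S j} = S i ∩ {σ | ∀ j ∈ l, σ ∈ S j} := by
      ext σ; simp
    rw [hsplit, wmc_inter hw (hS i List.mem_cons_self) hrest,
      ih (fun j hj => hS j (List.mem_cons_of_mem i hj)) hl, List.map_cons, List.prod_cons]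

end Normalized

end WeightedModelCount

section Sampler

variable {V : Type} [Fintype V] {W : V → Bool → ℝ}

theorem prod_branchParam (σ : V → Bool) :
    ∏ v, branchParam W v (σ v) = (∏ v, W v (σ v)) / ∏ v, (W v true + W v false) := by
  simp only [branchParam, Finset.prod_div_distrib]

variable [DecidableEq V]

theorem wmc_branchParam (S : Set (V → Bool)) :
    wmc (branchParam W) S = wmc W S / ∏ v, (W v true + W v false) := by
  rw [wmc, wmc, Finset.sum_div]
  refine Finset.sum_congr rfl fun σ _ => ?_
  by_cases hσ : σ ∈ S <;> simp [hσ, weight, prod_branchParam]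

theorem wmc_models (D : PROB V) :
    wmc W D.models = ∑ σ ∈ Finset.univ.filter (fun σ => D.satb σ = true), weight W σ := by
  rw [wmc, Finset.sum_filter]
  simp only [Set.indicator_apply, models, Set.mem_ofPred_eq]

theorem jointP_eq_wmc (hW : ∀ v b, 0 < W v b) {D : PROB V} (hD : D.Wf) :
    D.jointP W = wmc (branchParam W) D.models := by
  have hθ := branchParam_true_add_false hW
  induction hD with
  | tru => simpa [jointP, models, satb] using (wmc_univ hθ).symm
  | fls => simp [jointP, models, satb, wmc]
  | @dec x lo hi hxlo hxhi _ _ _ ihlo ihhi =>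
    have hbranch : ∀ (b : Bool) (E : PROB V), x ∉ E.vars →
        wmc (branchParam W) ({σ | σ x = b} ∩ E.models) =
          branchParam W x b * wmc (branchParam W) E.models := fun b E hxE => by
      rw [← wmc_setOf_apply_eq hθ x b]
      refine wmc_inter hθ (s := {x}) (fun σ σ' h => ?_) ((dependsOn_mem_models E).mono ?_)
      · simp [h x rfl]
      · simpa using hxE
    have hsplit : (dec x lo hi).models =
        ({σ | σ x = false} ∩ lo.models) ∪ ({σ | σ x = true} ∩ hi.models) := by
      ext σ; cases hσ : σ x <;> simp [models, satb, hσ]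
    have hdisj : Disjoint ({σ : V → Bool | σ x = false} ∩ lo.models)
        ({σ | σ x = true} ∩ hi.models) :=
      Set.disjoint_left.2 fun σ h h' => by simp_all
    rw [hsplit, wmc_union hdisj, hbranch false lo hxlo, hbranch true hi hxhi, ← ihlo, ← ihhi,
      jointP_dec]
  | @conj cs _ hdecomp ih =>
    have hmodels : (conj cs).models = {σ | ∀ c ∈ cs, σ ∈ c.models} := by
      ext σ; exact satb_conj
    rw [hmodels, wmc_setOf_forall_list_mem hθ cs models (fun c => (c.vars : Set V))
      (fun c _ => dependsOn_mem_models c) (hdecomp.imp Finset.disjoint_coe.2), jointP_conj]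
    exact congrArg List.prod (List.map_congr_left ih)

theorem jointP_pos (hW : ∀ v b, 0 < W v b) {D : PROB V} (hD : D.Wf) {τ : V → Bool}
    (hτ : D.satb τ = true) : 0 < D.jointP W := by
  rw [jointP_eq_wmc hW hD]
  exact wmc_pos (branchParam_pos hW) hτ

theorem sampP_mul_jointP (hW : ∀ v b, 0 < W v b) {D : PROB V} (hD : D.Wf) {τ : V → Bool}
    (hτ : D.satb τ = true) :
    D.sampP W τ * D.jointP W = ∏ v ∈ D.vars, branchParam W v (τ v) := by
  induction hD with
  | tru => simp [sampP, jointP, vars]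
  | fls => simp [satb] at hτ
  | @dec x lo hi hxlo hxhi hsmooth hlo hhi ihlo ihhi =>
    have hP := (jointP_pos hW (Wf.dec hxlo hxhi hsmooth hlo hhi) hτ).ne'
    rw [sampP_dec, vars, ← hsmooth, Finset.union_self]
    cases hx : τ x
    · simp only [satb, hx, Bool.false_eq_true, if_false] at hτ ⊢
      rw [Finset.prod_insert hxlo, hx, ← ihlo hτ]
      field_simp
    · simp only [satb, hx, if_true] at hτ ⊢
      rw [hsmooth, Finset.prod_insert hxhi, hx, ← ihhi hτ]
      field_simp
  | @conj cs _ hdecomp ih =>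
    rw [sampP_conj, jointP_conj, ← List.prod_map_mul, prod_vars_conj _ hdecomp]
    exact congrArg List.prod (List.map_congr_left fun c hc => ih c hc (satb_conj.1 hτ c hc))

end Sampler

end PROB

theorem stmt_9_general {V : Type} [Fintype V] [DecidableEq V]
    (D : PROB V) (hD : D.Wf) (hvars : D.vars = Finset.univ)
    (W : V → Bool → ℝ) (hW : ∀ v b, 0 < W v b) :
    ∀ τ : V → Bool,
      D.sampP W τ =
        if D.satb τ = true then
          (∏ v : V, W v (τ v)) /
            ∑ τ' ∈ Finset.univ.filter (fun τ' : V → Bool => D.satb τ' = true),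
              ∏ v : V, W v (τ' v)
        else 0 := by
  intro τ
  split_ifs with hτ
  · have hC : ∏ v, (W v true + W v false) ≠ 0 :=
      Finset.prod_ne_zero_iff.2 fun v _ => (add_pos (hW v true) (hW v false)).ne'
    rw [eq_div_of_mul_eq (PROB.jointP_pos hW hD hτ).ne' (PROB.sampP_mul_jointP hW hD hτ), hvars,
      PROB.jointP_eq_wmc hW hD, PROB.prod_branchParam, PROB.wmc_branchParam,
      div_div_div_cancel_right₀ hC, PROB.wmc_models]
    rfl
  · exact PROB.sampP_eq_zero W (by simpa using hτ)

/-- Correctness of INC (Proposition 2): on a satisfiable smooth,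
deterministic, decomposable PROB with positive-weight-induced branch
parameters, the sampler outputs each satisfying assignment `τ` with
probability `W(τ) / Σ_{τ' ⊨ F} W(τ')`, and non-satisfying assignments with
probability 0. -/
theorem stmt_9 {V : Type} [Fintype V] [DecidableEq V]
    (D : PROB V) (hD : D.Wf) (hvars : D.vars = Finset.univ)
    (W : V → Bool → ℝ) (hW : ∀ v b, 0 < W v b)
    (hsat : ∃ τ : V → Bool, D.satb τ = true) :
    ∀ τ : V → Bool,
      D.sampP W τ =
        if D.satb τ = true then
          (∏ v : V, W v (τ v)) /
            ∑ τ' ∈ Finset.univ.filter (fun τ' : V → Bool => D.satb τ' = true),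
              ∏ v : V, W v (τ' v)
        else 0 :=
  stmt_9_general D hD hvars W hW
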